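/- arXiv:math/0501127 — 3 statements merged into one kernel-verified Lean document; each statement's English description precedes it below -/
import Mathlib

section
/- For all positive reals ε, η and every k ∈ ℝ³ \ {0}, the six vectors b₀¹, b₀², b₊¹, b₊², b₋¹, b₋² form a basis of ℝ⁶ which is orthonormal with respect to the inner product (u, w) ↦ uᵀ A⁰ w; that is, b_αᵀ A⁰ b_β = δ_{αβ} for α, β running over the six labels. -/
open Matrix

noncomputable section

/-- `A⁰ = diag(ε I₃, η I₃)`. -/
def A0 (ε η : ℝ) : Matrix (Fin 3 ⊕ Fin 3) (Fin 3 ⊕ Fin 3) ℝ :=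
  Matrix.fromBlocks (ε • 1) 0 0 (η • 1)

/-- The Euclidean norm `|k|`. -/
def nk (k : Fin 3 → ℝ) : ℝ := Real.sqrt (∑ j, (k j) ^ 2)

/-- The six polar vectors `b₀¹, b₀², b₊¹, b₊², b₋¹, b₋²` built from the propagation
triple `(κ, z¹, z²)`. -/
def polarBasis (ε η : ℝ) (κ z1 z2 : Fin 3 → ℝ) : Fin 6 → (Fin 3 ⊕ Fin 3 → ℝ) :=
  ![Sum.elim ((Real.sqrt ε)⁻¹ • κ) 0,
    Sum.elim 0 ((Real.sqrt η)⁻¹ • κ),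
    Sum.elim ((Real.sqrt (2 * ε))⁻¹ • z1) ((Real.sqrt (2 * η))⁻¹ • z2),
    Sum.elim ((Real.sqrt (2 * ε))⁻¹ • z2) (-(Real.sqrt (2 * η))⁻¹ • z1),
    Sum.elim ((Real.sqrt (2 * ε))⁻¹ • z1) (-(Real.sqrt (2 * η))⁻¹ • z2),
    Sum.elim ((Real.sqrt (2 * ε))⁻¹ • z2) ((Real.sqrt (2 * η))⁻¹ • z1)]

/-! Expanding the block form of `A⁰`, `uᵀ A⁰ w` is `ε` times the Euclidean product of the first
components plus `η` times that of the second ones. Orthonormality of `(κ, z¹, z²)` and the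
normalising factors then make the Gram matrix of the six vectors the identity, and a family with
identity Gram matrix is linearly independent; six independent vectors span `ℝ⁶`. -/

lemma linearIndependent_of_dotProduct_mulVec_eq_ite {ι n R : Type*} [Fintype ι] [DecidableEq ι]
    [Fintype n] [CommRing R] (M : Matrix n n R) {v : ι → n → R}
    (hv : ∀ i j, v i ⬝ᵥ (M *ᵥ v j) = if i = j then 1 else 0) : LinearIndependent R v := by
  rw [Fintype.linearIndependent_iff]
  intro g hg j
  simpa [sum_dotProduct, smul_dotProduct, hv] using congrArg (· ⬝ᵥ (M *ᵥ v j)) hg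

lemma sumElim_dotProduct_A0_mulVec_sumElim (ε η : ℝ) (a b c d : Fin 3 → ℝ) :
    Sum.elim a b ⬝ᵥ (A0 ε η *ᵥ Sum.elim c d) = ε * (a ⬝ᵥ c) + η * (b ⬝ᵥ d) := by
  simp [A0, fromBlocks_mulVec, sumElim_dotProduct_sumElim, smul_mulVec, dotProduct_smul]

lemma nk_eq_sqrt_dotProduct_self (k : Fin 3 → ℝ) : nk k = √(k ⬝ᵥ k) := by
  simp [nk, dotProduct, sq]

lemma inv_nk_smul_dotProduct_self {k : Fin 3 → ℝ} (hk : k ≠ 0) :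
    ((nk k)⁻¹ • k) ⬝ᵥ ((nk k)⁻¹ • k) = 1 := by
  have hpos : 0 < k ⬝ᵥ k := by simpa using dotProduct_self_star_pos_iff.2 hk
  rw [smul_dotProduct, dotProduct_smul, nk_eq_sqrt_dotProduct_self, smul_eq_mul, smul_eq_mul,
    ← mul_assoc, ← mul_inv, Real.mul_self_sqrt hpos.le, inv_mul_cancel₀ hpos.ne']

lemma polarBasis_dotProduct_A0_mulVec {ε η : ℝ} (hε : 0 < ε) (hη : 0 < η)
    {κ z1 z2 : Fin 3 → ℝ} (hκ : κ ⬝ᵥ κ = 1) (hz1 : z1 ⬝ᵥ z1 = 1) (hz2 : z2 ⬝ᵥ z2 = 1)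
    (hκz1 : κ ⬝ᵥ z1 = 0) (hκz2 : κ ⬝ᵥ z2 = 0) (hz12 : z1 ⬝ᵥ z2 = 0) (α β : Fin 6) :
    polarBasis ε η κ z1 z2 α ⬝ᵥ (A0 ε η *ᵥ polarBasis ε η κ z1 z2 β)
      = if α = β then 1 else 0 := by
  have hz1κ : z1 ⬝ᵥ κ = 0 := by rwa [dotProduct_comm]
  have hz2κ : z2 ⬝ᵥ κ = 0 := by rwa [dotProduct_comm]
  have hz21 : z2 ⬝ᵥ z1 = 0 := by rwa [dotProduct_comm]
  have mul_inv_sqrt_sq {x : ℝ} (hx : 0 < x) : x * ((√x)⁻¹ * (√x)⁻¹) = 1 := by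
    rw [← mul_inv, Real.mul_self_sqrt hx.le, mul_inv_cancel₀ hx.ne']
  have hεa := mul_inv_sqrt_sq hε
  have hηb := mul_inv_sqrt_sq hη
  have hεc : ε * ((√(2 * ε))⁻¹ * (√(2 * ε))⁻¹) = 1 / 2 := by
    linear_combination (1 / 2 : ℝ) * mul_inv_sqrt_sq (mul_pos two_pos hε)
  have hηd : η * ((√(2 * η))⁻¹ * (√(2 * η))⁻¹) = 1 / 2 := by
    linear_combination (1 / 2 : ℝ) * mul_inv_sqrt_sq (mul_pos two_pos hη)
  unfold polarBasis
  generalize (√ε)⁻¹ = a at hεa ⊢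
  generalize (√η)⁻¹ = b at hηb ⊢
  generalize (√(2 * ε))⁻¹ = c at hεc ⊢
  generalize (√(2 * η))⁻¹ = d at hηd ⊢
  fin_cases α <;> fin_cases β <;>
    simp [sumElim_dotProduct_A0_mulVec_sumElim, smul_dotProduct, dotProduct_smul,
      hκ, hz1, hz2, hκz1, hκz2, hz12, hz1κ, hz2κ, hz21] <;> linarith

theorem polarBasis_orthonormal_general (ε η : ℝ) (hε : 0 < ε) (hη : 0 < η)
    (k : Fin 3 → ℝ) (hk : k ≠ 0) (z1 z2 : Fin 3 → ℝ)
    (hz1 : z1 ⬝ᵥ z1 = 1) (hz2 : z2 ⬝ᵥ z2 = 1)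
    (hkz1 : ((nk k)⁻¹ • k) ⬝ᵥ z1 = 0) (hkz2 : ((nk k)⁻¹ • k) ⬝ᵥ z2 = 0)
    (hz12 : z1 ⬝ᵥ z2 = 0) :
    LinearIndependent ℝ (polarBasis ε η ((nk k)⁻¹ • k) z1 z2) ∧
    Submodule.span ℝ (Set.range (polarBasis ε η ((nk k)⁻¹ • k) z1 z2)) = ⊤ ∧
    ∀ α β : Fin 6,
      polarBasis ε η ((nk k)⁻¹ • k) z1 z2 α
          ⬝ᵥ (A0 ε η *ᵥ polarBasis ε η ((nk k)⁻¹ • k) z1 z2 β)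
        = if α = β then 1 else 0 := by
  have gram := polarBasis_dotProduct_A0_mulVec hε hη (inv_nk_smul_dotProduct_self hk)
    hz1 hz2 hkz1 hkz2 hz12
  have hli := linearIndependent_of_dotProduct_mulVec_eq_ite (A0 ε η) gram
  exact ⟨hli, hli.span_eq_top_of_card_eq_finrank (by simp), gram⟩

/-- The six vectors `b₀¹, b₀², b₊¹, b₊², b₋¹, b₋²` form a basis of `ℝ⁶` which is
orthonormal with respect to the inner product `(u,w) ↦ uᵀ A⁰ w`. -/
theorem polarBasis_orthonormal (ε η : ℝ) (hε : 0 < ε) (hη : 0 < η)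
    (k : Fin 3 → ℝ) (hk : k ≠ 0) (z1 z2 : Fin 3 → ℝ)
    (hz1 : z1 ⬝ᵥ z1 = 1) (hz2 : z2 ⬝ᵥ z2 = 1)
    (hkz1 : ((nk k)⁻¹ • k) ⬝ᵥ z1 = 0) (hkz2 : ((nk k)⁻¹ • k) ⬝ᵥ z2 = 0)
    (hz12 : z1 ⬝ᵥ z2 = 0)
    (hc1 : crossProduct ((nk k)⁻¹ • k) z1 = z2)
    (hc2 : crossProduct z1 z2 = (nk k)⁻¹ • k)
    (hc3 : crossProduct z2 ((nk k)⁻¹ • k) = z1) :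
    LinearIndependent ℝ (polarBasis ε η ((nk k)⁻¹ • k) z1 z2) ∧
    Submodule.span ℝ (Set.range (polarBasis ε η ((nk k)⁻¹ • k) z1 z2)) = ⊤ ∧
    ∀ α β : Fin 6,
      polarBasis ε η ((nk k)⁻¹ • k) z1 z2 α
          ⬝ᵥ (A0 ε η *ᵥ polarBasis ε η ((nk k)⁻¹ • k) z1 z2 β)
        = if α = β then 1 else 0 :=
  polarBasis_orthonormal_general ε η hε hη k hk z1 z2 hz1 hz2 hkz1 hkz2 hz12
end
end

section
/- Let ε, η : ℝ³ → ℝ be continuous and everywhere positive, v(x) = 1/√(ε(x)η(x)), A⁰(x) = diag(ε(x) I₃, η(x) I₃), and let ω ∈ ℝ with ω ≠ 0. Let (μ_{mn})_{1≤m,n≤6} be finite complex Borel measures on ℝ³ × ℝ³ such that for all indices i, j ∈ {1,…,6} and every continuous compactly supported function f : ℝ³ × ℝ³ → ℂ, Σ_{m=1}^{6} ∫ f(x,k) (ω A⁰(x) − Σ_{l=1}^{3} k_l A^l)_{i m} dμ_{m j}(x,k) = 0. Then every μ_{mn} vanishes on the open set {(x,k) : v(x)|k| ≠ |ω|}; i.e.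 any such matrix-valued semiclassical measure is supported on the union of the dispersion sets {v(x)|k| = ω} ∪ {−v(x)|k| = ω}. -/
open Matrix MeasureTheory

noncomputable section

/-- The `3×3` matrices `Q_j` determined by `Q_j w = e_j × w`. -/
def Qm : Fin 3 → Matrix (Fin 3) (Fin 3) ℝ :=
  ![!![0, 0, 0; 0, 0, -1; 0, 1, 0],
    !![0, 0, 1; 0, 0, 0; -1, 0, 0],
    !![0, -1, 0; 1, 0, 0; 0, 0, 0]]

/-- The symmetric `6×6` block matrices `A^j = [[0, Q_jᵀ],[Q_j, 0]]`. -/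
def Am (j : Fin 3) : Matrix (Fin 3 ⊕ Fin 3) (Fin 3 ⊕ Fin 3) ℝ :=
  Matrix.fromBlocks 0 (Qm j)ᵀ (Qm j) 0

/-- The propagation speed `v = 1/√(εη)`. -/
def vel (ε η : ℝ) : ℝ := (Real.sqrt (ε * η))⁻¹

/-- Algebraic core: off the dispersion sets, the Maxwell symbol has trivial kernel
(solved explicitly). -/
lemma solve_maxwell (a b k1 k2 k3 : ℂ) (ha : a ≠ 0) (hb : b ≠ 0)
    (hK : a * b ≠ k1^2 + k2^2 + k3^2)
    (e1 e2 e3 h1 h2 h3 : ℂ)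
    (eq1 : a * e1 + (k2 * h3 - k3 * h2) = 0)
    (eq2 : a * e2 + (k3 * h1 - k1 * h3) = 0)
    (eq3 : a * e3 + (k1 * h2 - k2 * h1) = 0)
    (eq4 : b * h1 - (k2 * e3 - k3 * e2) = 0)
    (eq5 : b * h2 - (k3 * e1 - k1 * e3) = 0)
    (eq6 : b * h3 - (k1 * e2 - k2 * e1) = 0) :
    e1 = 0 ∧ e2 = 0 ∧ e3 = 0 ∧ h1 = 0 ∧ h2 = 0 ∧ h3 = 0 := by
  have hKd : a * b - (k1^2 + k2^2 + k3^2) ≠ 0 := sub_ne_zero.mpr hK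
  have hσ : k1 * e1 + k2 * e2 + k3 * e3 = 0 := by
    have : a * (k1 * e1 + k2 * e2 + k3 * e3) = 0 := by
      linear_combination k1 * eq1 + k2 * eq2 + k3 * eq3
    exact (mul_eq_zero.mp this).resolve_left ha
  have he1 : e1 = 0 := by
    have : (a * b - (k1^2 + k2^2 + k3^2)) * e1 = 0 := by
      linear_combination b * eq1 + k3 * eq5 - k2 * eq6 - k1 * hσ
    exact (mul_eq_zero.mp this).resolve_left hKd
  have he2 : e2 = 0 := by
    have : (a * b - (k1^2 + k2^2 + k3^2)) * e2 = 0 := by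
      linear_combination b * eq2 + k1 * eq6 - k3 * eq4 - k2 * hσ
    exact (mul_eq_zero.mp this).resolve_left hKd
  have he3 : e3 = 0 := by
    have : (a * b - (k1^2 + k2^2 + k3^2)) * e3 = 0 := by
      linear_combination b * eq3 + k2 * eq4 - k1 * eq5 - k3 * hσ
    exact (mul_eq_zero.mp this).resolve_left hKd
  refine ⟨he1, he2, he3, ?_, ?_, ?_⟩
  · have : b * h1 = 0 := by rw [he2, he3] at eq4; linear_combination eq4
    exact (mul_eq_zero.mp this).resolve_left hb
  · have : b * h2 = 0 := by rw [he1, he3] at eq5; linear_combination eq5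
    exact (mul_eq_zero.mp this).resolve_left hb
  · have : b * h3 = 0 := by rw [he1, he2] at eq6; linear_combination eq6
    exact (mul_eq_zero.mp this).resolve_left hb

/-- Off the dispersion sets, the (complexified) Maxwell symbol has trivial kernel. -/
lemma kernel_zero (εx ηx ω : ℝ) (hε : 0 < εx) (hη : 0 < ηx) (hω : ω ≠ 0)
    (k : Fin 3 → ℝ) (hd : vel εx ηx * nk k ≠ |ω|)
    (u : Fin 3 ⊕ Fin 3 → ℂ)
    (hu : ∀ i, ∑ m, (((ω • A0 εx ηx - ∑ l : Fin 3, k l • Am l) i m : ℝ) : ℂ) * u m = 0) :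
    ∀ m, u m = 0 := by
  have hεη : (0:ℝ) < εx * ηx := mul_pos hε hη
  have hs : Real.sqrt (εx * ηx) ≠ 0 := ne_of_gt (Real.sqrt_pos.mpr hεη)
  have hreal : (ω * εx) * (ω * ηx) ≠ k 0 ^ 2 + k 1 ^ 2 + k 2 ^ 2 := by
    intro hcontra
    apply hd
    have hnk : nk k = |ω| * Real.sqrt (εx * ηx) := by
      rw [nk, Fin.sum_univ_three, ← hcontra,
        show (ω * εx) * (ω * ηx) = ω ^ 2 * (εx * ηx) by ring,
        Real.sqrt_mul (sq_nonneg ω), Real.sqrt_sq_eq_abs]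
    rw [vel, hnk]
    field_simp
  have ha : ((ω : ℂ) * εx) ≠ 0 := by
    exact_mod_cast mul_ne_zero hω (ne_of_gt hε)
  have hb : ((ω : ℂ) * ηx) ≠ 0 := by
    exact_mod_cast mul_ne_zero hω (ne_of_gt hη)
  have hK : ((ω : ℂ) * εx) * ((ω : ℂ) * ηx) ≠
      ((k 0 : ℂ))^2 + ((k 1 : ℂ))^2 + ((k 2 : ℂ))^2 := by
    exact_mod_cast hreal
  have e1 := hu (Sum.inl 0)
  have e2 := hu (Sum.inl 1)
  have e3 := hu (Sum.inl 2)
  have e4 := hu (Sum.inr 0)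
  have e5 := hu (Sum.inr 1)
  have e6 := hu (Sum.inr 2)
  simp [Matrix.vecHead, Matrix.vecTail, Matrix.transpose_apply, Fintype.sum_sum_type,
    Fin.sum_univ_three, A0, Am, Qm, Matrix.sum_apply] at e1 e2 e3 e4 e5 e6
  obtain ⟨a1, a2, a3, b1, b2, b3⟩ := solve_maxwell ((ω : ℂ) * εx) ((ω : ℂ) * ηx)
    (k 0 : ℂ) (k 1 : ℂ) (k 2 : ℂ) ha hb hK
    (u (Sum.inl 0)) (u (Sum.inl 1)) (u (Sum.inl 2))
    (u (Sum.inr 0)) (u (Sum.inr 1)) (u (Sum.inr 2))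
    (by linear_combination e1) (by linear_combination e2) (by linear_combination e3)
    (by linear_combination e4) (by linear_combination e5) (by linear_combination e6)
  intro m
  rcases m with m | m <;> fin_cases m <;> assumption

/-- Localisation principle for semiclassical measures of Maxwell's system:
a matrix of finite complex measures `μ_{mn} = h_{mn} ρ` (with `ρ` a finite positive
measure and `h_{mn} ∈ L¹(ρ)`, which is the general form of a matrix-valued complex
Borel measure) satisfying `(ω A⁰(x) − Σ_l k_l A^l) · μ = 0` in the weak sense vanishes
on the open set `{(x,k) : v(x)|k| ≠ |ω|}`; i.e. it is supported on the union of the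
dispersion sets `{v(x)|k| = ω} ∪ {−v(x)|k| = ω}`. -/
theorem semiclassical_measure_supported_on_dispersion_sets
    (ε η : (Fin 3 → ℝ) → ℝ) (hεc : Continuous ε) (hηc : Continuous η)
    (hεp : ∀ x, 0 < ε x) (hηp : ∀ x, 0 < η x)
    (ω : ℝ) (hω : ω ≠ 0)
    (ρ : Measure ((Fin 3 → ℝ) × (Fin 3 → ℝ))) (hρ : IsFiniteMeasure ρ)
    (h : Fin 3 ⊕ Fin 3 → Fin 3 ⊕ Fin 3 → ((Fin 3 → ℝ) × (Fin 3 → ℝ)) → ℂ)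
    (hint : ∀ m n, Integrable (h m n) ρ)
    (hloc : ∀ (i j : Fin 3 ⊕ Fin 3) (f : ((Fin 3 → ℝ) × (Fin 3 → ℝ)) → ℂ),
      Continuous f → HasCompactSupport f →
      ∑ m : Fin 3 ⊕ Fin 3,
        ∫ p, f p * (((ω • A0 (ε p.1) (η p.1) - ∑ l : Fin 3, p.2 l • Am l) i m : ℝ) : ℂ)
          * h m j p ∂ρ = 0) :
    ∀ (m n : Fin 3 ⊕ Fin 3) (s : Set ((Fin 3 → ℝ) × (Fin 3 → ℝ))),
      MeasurableSet s → (∀ p ∈ s, vel (ε p.1) (η p.1) * nk p.2 ≠ |ω|) →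
      ∫ p in s, h m n p ∂ρ = 0 := by
  have hMc : ∀ (i mm : Fin 3 ⊕ Fin 3), Continuous fun p : (Fin 3 → ℝ) × (Fin 3 → ℝ) =>
      (((ω • A0 (ε p.1) (η p.1) - ∑ l : Fin 3, p.2 l • Am l) i mm : ℝ) : ℂ) := by
    intro i mm
    refine Complex.continuous_ofReal.comp ?_
    simp only [Matrix.sub_apply, Matrix.smul_apply, Matrix.sum_apply, smul_eq_mul]
    refine Continuous.sub ?_ (continuous_finset_sum _ fun l _ =>
      ((continuous_apply l).comp continuous_snd).mul continuous_const)
    rcases i with i | i <;> rcases mm with mm | mm <;>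
      by_cases hne : i = mm <;>
      simp [A0, Matrix.one_apply, hne] <;> fun_prop
  have key : ∀ (i j : Fin 3 ⊕ Fin 3), ∀ᵐ p ∂ρ,
      ∑ mm : Fin 3 ⊕ Fin 3,
        (((ω • A0 (ε p.1) (η p.1) - ∑ l : Fin 3, p.2 l • Am l) i mm : ℝ) : ℂ)
          * h mm j p = 0 := by
    intro i j
    have hli : LocallyIntegrable (fun p =>
        ∑ mm : Fin 3 ⊕ Fin 3,
          (((ω • A0 (ε p.1) (η p.1) - ∑ l : Fin 3, p.2 l • Am l) i mm : ℝ) : ℂ)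
            * h mm j p) ρ := by
      rw [locallyIntegrable_iff]
      intro K hK
      apply integrable_finset_sum
      intro mm _
      exact IntegrableOn.continuousOn_mul ((hMc i mm).continuousOn)
        ((hint mm j).integrableOn) hK
    apply ae_eq_zero_of_integral_contDiff_smul_eq_zero hli
    intro g hg hgsupp
    have hfc : Continuous fun p : (Fin 3 → ℝ) × (Fin 3 → ℝ) => ((g p : ℝ) : ℂ) :=
      Complex.continuous_ofReal.comp hg.continuous
    have hfs : HasCompactSupport fun p : (Fin 3 → ℝ) × (Fin 3 → ℝ) => ((g p : ℝ) : ℂ) :=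
      hgsupp.comp_left Complex.ofReal_zero
    have h0 := hloc i j _ hfc hfs
    have hInt : ∀ mm : Fin 3 ⊕ Fin 3, mm ∈ (Finset.univ : Finset (Fin 3 ⊕ Fin 3)) →
        Integrable (fun p => ((g p : ℝ) : ℂ)
          * (((ω • A0 (ε p.1) (η p.1) - ∑ l : Fin 3, p.2 l • Am l) i mm : ℝ) : ℂ)
          * h mm j p) ρ := by
      intro mm _
      obtain ⟨C, hC⟩ := (hfc.mul (hMc i mm)).bounded_above_of_compact_support (hfs.mul_right)
      exact (hint mm j).bdd_mul ((hfc.mul (hMc i mm)).aestronglyMeasurable) (ae_of_all _ hC)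
    rw [← integral_finset_sum _ hInt] at h0
    rw [← h0]
    congr 1
    funext p
    rw [Finset.smul_sum]
    refine Finset.sum_congr rfl fun mm _ => ?_
    rw [Complex.real_smul, ← mul_assoc]
  have keyall : ∀ᵐ p ∂ρ, ∀ (i j : Fin 3 ⊕ Fin 3),
      ∑ mm : Fin 3 ⊕ Fin 3,
        (((ω • A0 (ε p.1) (η p.1) - ∑ l : Fin 3, p.2 l • Am l) i mm : ℝ) : ℂ)
          * h mm j p = 0 :=
    ae_all_iff.mpr fun i => ae_all_iff.mpr fun j => key i j
  intro m n s hs hds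
  apply integral_eq_zero_of_ae
  filter_upwards [ae_restrict_mem hs, ae_restrict_of_ae keyall] with p hp hkey
  exact kernel_zero (ε p.1) (η p.1) ω (hεp p.1) (hηp p.1) hω p.2 (hds p hp)
    (fun mm => h mm n p) (fun i => hkey i n) m
end
end

section
/- Let ε, η > 0, v = 1/√(εη), k ∈ ℝ³ \ {0}, ω = v|k|, and let L(k) be the dispersion matrix. Let M be a 6×6 complex Hermitian positive semidefinite matrix such that L(k) M = ω M. Then there exist nonnegative reals t₁, t₂ and vectors c₁, c₂ ∈ ℂ⁶ with L(k) c₁ = ω c₁ and L(k) c₂ = ω c₂ such that M = t₁ c₁ c₁* + t₂ c₂ c₂* (where c c* denotes the rank-one matrix with entries c_i · conj(c_j)). In particular every positive semidefinite Hermitian matrix intertwined with the eigenvalue ω₊ = v|k| of L(k) is a nonnegative combination of at most two rank-one projections onto eigenvectors of L(k) for that eigenvalue. -/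
open Matrix
open scoped ComplexOrder

noncomputable section

/-- The dispersion matrix `L(k) = Σ_j k_j (A⁰)⁻¹ A^j`. -/
def Lm (ε η : ℝ) (k : Fin 3 → ℝ) : Matrix (Fin 3 ⊕ Fin 3) (Fin 3 ⊕ Fin 3) ℝ :=
  ∑ j : Fin 3, k j • ((A0 ε η)⁻¹ * Am j)

lemma A0_inv (ε η : ℝ) (hε : ε ≠ 0) (hη : η ≠ 0) :
    (A0 ε η)⁻¹ = Matrix.fromBlocks (ε⁻¹ • 1) 0 0 (η⁻¹ • 1) := by
  apply Matrix.inv_eq_right_inv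
  simp [A0, Matrix.fromBlocks_multiply, smul_smul, inv_mul_cancel₀ hε, inv_mul_cancel₀ hη,
    Matrix.fromBlocks_one]

lemma Lm_eq (ε η : ℝ) (hε : ε ≠ 0) (hη : η ≠ 0) (k : Fin 3 → ℝ) :
    Lm ε η k = Matrix.fromBlocks 0
      (ε⁻¹ • !![0, k 2, -(k 1); -(k 2), 0, k 0; k 1, -(k 0), 0])
      (η⁻¹ • !![0, -(k 2), k 1; k 2, 0, -(k 0); -(k 1), k 0, 0]) 0 := by
  rw [Lm, A0_inv ε η hε hη]
  ext (i | i) (j | j) <;> fin_cases i <;> fin_cases j <;>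
    simp [Matrix.sum_apply, Fin.sum_univ_three, Qm, Am, Matrix.mul_apply,
      Matrix.fromBlocks_multiply, Matrix.vecHead, Matrix.vecTail] <;> ring

lemma Lmap_mulVec (ε η : ℝ) (hε : ε ≠ 0) (hη : η ≠ 0) (k : Fin 3 → ℝ)
    (c : Fin 3 ⊕ Fin 3 → ℂ) :
    (Lm ε η k).map Complex.ofReal *ᵥ c = Sum.elim
      (fun i => (ε : ℂ)⁻¹ * ![(k 2 : ℂ) * c (Sum.inr 1) - (k 1 : ℂ) * c (Sum.inr 2),
                              (k 0 : ℂ) * c (Sum.inr 2) - (k 2 : ℂ) * c (Sum.inr 0),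
                              (k 1 : ℂ) * c (Sum.inr 0) - (k 0 : ℂ) * c (Sum.inr 1)] i)
      (fun i => (η : ℂ)⁻¹ * ![(k 1 : ℂ) * c (Sum.inl 2) - (k 2 : ℂ) * c (Sum.inl 1),
                              (k 2 : ℂ) * c (Sum.inl 0) - (k 0 : ℂ) * c (Sum.inl 2),
                              (k 0 : ℂ) * c (Sum.inl 1) - (k 1 : ℂ) * c (Sum.inl 0)] i) := by
  rw [Lm_eq ε η hε hη]
  funext x
  cases x with
  | inl i =>
      fin_cases i <;>
        simp [Matrix.mulVec, dotProduct, Fintype.sum_sum_type, Fin.sum_univ_three,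
          Matrix.fromBlocks, Matrix.vecHead, Matrix.vecTail] <;> ring
  | inr i =>
      fin_cases i <;>
        simp [Matrix.mulVec, dotProduct, Fintype.sum_sum_type, Fin.sum_univ_three,
          Matrix.fromBlocks, Matrix.vecHead, Matrix.vecTail] <;> ring

lemma omega_pos (ε η : ℝ) (hε : 0 < ε) (hη : 0 < η) (k : Fin 3 → ℝ) (hk : k ≠ 0) :
    0 < vel ε η * nk k := by
  obtain ⟨i, hi0⟩ := Function.ne_iff.mp hk
  have hi : k i ≠ 0 := by simpa using hi0
  have h1 : 0 < nk k := by
    apply Real.sqrt_pos.mpr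
    apply Finset.sum_pos' (fun j _ => sq_nonneg _)
    exact ⟨i, Finset.mem_univ i, by nlinarith [sq_nonneg (k i), sq_abs (k i), abs_pos.mpr hi]⟩
  have h2 : 0 < vel ε η := by
    unfold vel
    positivity
  positivity

/-- The eigenspace of `L(k)` for the eigenvalue `ω₊ = v|k|` has dimension at most `2`. -/
lemma eig_finrank_le (ε η : ℝ) (hε : 0 < ε) (hη : 0 < η) (k : Fin 3 → ℝ) (hk : k ≠ 0) :
    Module.finrank ℂ (LinearMap.ker (((Lm ε η k).map Complex.ofReal).mulVecLin
      - ((vel ε η * nk k : ℝ) : ℂ) •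
        (LinearMap.id : (Fin 3 ⊕ Fin 3 → ℂ) →ₗ[ℂ] (Fin 3 ⊕ Fin 3 → ℂ)))) ≤ 2 := by
  set ω : ℂ := ((vel ε η * nk k : ℝ) : ℂ) with hωdef
  have hω : ω ≠ 0 := Complex.ofReal_ne_zero.mpr (omega_pos ε η hε hη k hk).ne'
  have hL := Lmap_mulVec ε η hε.ne' hη.ne' k
  set ES := LinearMap.ker (((Lm ε η k).map Complex.ofReal).mulVecLin
      - ω • (LinearMap.id : (Fin 3 ⊕ Fin 3 → ℂ) →ₗ[ℂ] (Fin 3 ⊕ Fin 3 → ℂ))) with hES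
  have hmemES : ∀ c : Fin 3 ⊕ Fin 3 → ℂ, c ∈ ES ↔
      (Lm ε η k).map Complex.ofReal *ᵥ c = ω • c := by
    intro c
    rw [hES, LinearMap.mem_ker, LinearMap.sub_apply, LinearMap.smul_apply, LinearMap.id_apply,
      Matrix.mulVecLin_apply, sub_eq_zero]
  have key : ∀ c : Fin 3 ⊕ Fin 3 → ℂ, c ∈ ES →
      ((k 0 : ℂ) * c (Sum.inl 0) + (k 1 : ℂ) * c (Sum.inl 1) + (k 2 : ℂ) * c (Sum.inl 2) = 0)
      ∧ ((∀ i, c (Sum.inl i) = 0) → c = 0) := by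
    intro c hc
    rw [hmemES, hL] at hc
    have e0 := congrFun hc (Sum.inl 0)
    have e1 := congrFun hc (Sum.inl 1)
    have e2 := congrFun hc (Sum.inl 2)
    have f0 := congrFun hc (Sum.inr 0)
    have f1 := congrFun hc (Sum.inr 1)
    have f2 := congrFun hc (Sum.inr 2)
    simp [Matrix.vecHead, Matrix.vecTail] at e0 e1 e2 f0 f1 f2
    constructor
    · apply mul_left_cancel₀ hω
      rw [mul_zero]
      linear_combination (-(k 0 : ℂ)) * e0 - (k 1 : ℂ) * e1 - (k 2 : ℂ) * e2
    · intro h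
      funext x
      cases x with
      | inl i => exact h i
      | inr i =>
        fin_cases i
        · show c (Sum.inr 0) = 0
          apply mul_left_cancel₀ hω; rw [mul_zero]
          linear_combination -f0 + (η:ℂ)⁻¹ * (k 1 : ℂ) * h 2 - (η:ℂ)⁻¹ * (k 2 : ℂ) * h 1
        · show c (Sum.inr 1) = 0
          apply mul_left_cancel₀ hω; rw [mul_zero]
          linear_combination -f1 + (η:ℂ)⁻¹ * (k 2 : ℂ) * h 0 - (η:ℂ)⁻¹ * (k 0 : ℂ) * h 2
        · show c (Sum.inr 2) = 0
          apply mul_left_cancel₀ hω; rw [mul_zero]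
          linear_combination -f2 + (η:ℂ)⁻¹ * (k 0 : ℂ) * h 1 - (η:ℂ)⁻¹ * (k 1 : ℂ) * h 0
  set g : (Fin 3 → ℂ) →ₗ[ℂ] ℂ := ∑ i : Fin 3, (k i : ℂ) • LinearMap.proj i with hg
  have hgapp : ∀ E : Fin 3 → ℂ, g E = ∑ i : Fin 3, (k i : ℂ) * E i := by
    intro E
    simp [hg, LinearMap.sum_apply]
  have hgsurj : Function.Surjective g := by
    obtain ⟨i, hi0⟩ := Function.ne_iff.mp hk
    have hi : k i ≠ 0 := by simpa using hi0
    intro z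
    refine ⟨Pi.single i ((k i : ℂ)⁻¹ * z), ?_⟩
    rw [hgapp]
    rw [Finset.sum_eq_single i]
    · rw [Pi.single_eq_same, ← mul_assoc, mul_inv_cancel₀ (Complex.ofReal_ne_zero.mpr hi),
        one_mul]
    · intro b _ hb
      rw [Pi.single_eq_of_ne hb, mul_zero]
    · simp
  have hker : Module.finrank ℂ (LinearMap.ker g) = 2 := by
    have h := g.finrank_range_add_finrank_ker
    rw [LinearMap.range_eq_top.mpr hgsurj] at h
    simp only [finrank_top, Module.finrank_self] at h
    have h3 : Module.finrank ℂ (Fin 3 → ℂ) = 3 := by simp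
    rw [h3] at h
    omega
  set φ : ES →ₗ[ℂ] (Fin 3 → ℂ) := (LinearMap.funLeft ℂ ℂ Sum.inl).comp ES.subtype with hφ
  have hφmem : ∀ c : ES, φ c ∈ LinearMap.ker g := by
    intro c
    rw [LinearMap.mem_ker, hgapp, Fin.sum_univ_three]
    exact (key c.1 c.2).1
  set ψ : ES →ₗ[ℂ] LinearMap.ker g := φ.codRestrict (LinearMap.ker g) hφmem with hψ
  have hinj : Function.Injective ψ := by
    rw [← LinearMap.ker_eq_bot]
    apply (Submodule.eq_bot_iff _).mpr
    intro c hc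
    rw [LinearMap.mem_ker] at hc
    have hc0 : φ c = 0 := by
      have := congrArg Subtype.val hc
      simpa [hψ] using this
    have hzero : ∀ i, (c : Fin 3 ⊕ Fin 3 → ℂ) (Sum.inl i) = 0 := fun i => congrFun hc0 i
    exact Subtype.ext ((key c.1 c.2).2 hzero)
  calc Module.finrank ℂ ES ≤ Module.finrank ℂ (LinearMap.ker g) :=
        LinearMap.finrank_le_finrank_of_injective hinj
    _ = 2 := hker

/-- Every Hermitian positive semidefinite `6×6` matrix `M` with `L(k) M = ω₊ M`
(`ω₊ = v|k|`, `k ≠ 0`) is a nonnegative combination `M = t₁ c₁c₁* + t₂ c₂c₂*` of at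
most two rank-one projections onto eigenvectors of `L(k)` for the eigenvalue `ω₊`. -/
theorem posSemidef_eigen_decomposition (ε η : ℝ) (hε : 0 < ε) (hη : 0 < η)
    (k : Fin 3 → ℝ) (hk : k ≠ 0)
    (M : Matrix (Fin 3 ⊕ Fin 3) (Fin 3 ⊕ Fin 3) ℂ) (hM : M.PosSemidef)
    (hLM : (Lm ε η k).map Complex.ofReal * M = ((vel ε η * nk k : ℝ) : ℂ) • M) :
    ∃ (t1 t2 : ℝ) (c1 c2 : Fin 3 ⊕ Fin 3 → ℂ), 0 ≤ t1 ∧ 0 ≤ t2 ∧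
      (Lm ε η k).map Complex.ofReal *ᵥ c1 = ((vel ε η * nk k : ℝ) : ℂ) • c1 ∧
      (Lm ε η k).map Complex.ofReal *ᵥ c2 = ((vel ε η * nk k : ℝ) : ℂ) • c2 ∧
      M = (t1 : ℂ) • vecMulVec c1 (fun i => (starRingEnd ℂ) (c1 i))
            + (t2 : ℂ) • vecMulVec c2 (fun i => (starRingEnd ℂ) (c2 i)) := by
  have hH := hM.1
  set ω : ℂ := ((vel ε η * nk k : ℝ) : ℂ) with hωdef
  -- spectral decomposition of M as a sum of rank-one projections
  have hsum : M = ∑ l, ((hH.eigenvalues l : ℝ) : ℂ) •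
      vecMulVec (fun i => hH.eigenvectorBasis l i)
        (fun i => (starRingEnd ℂ) (hH.eigenvectorBasis l i)) := by
    conv_lhs => rw [hH.spectral_theorem, Unitary.conjStarAlgAut_apply]
    ext i j
    simp only [Matrix.mul_apply, Matrix.sum_apply, Matrix.smul_apply, vecMulVec_apply,
      Matrix.diagonal_apply, Matrix.star_apply, Matrix.IsHermitian.eigenvectorUnitary_apply,
      Function.comp_apply, smul_eq_mul, mul_ite, mul_zero, ite_mul, zero_mul,
      Finset.sum_ite_eq, Finset.mem_univ, if_true]
    apply Finset.sum_congr rfl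
    intro l _
    simp [RCLike.star_def, mul_comm, mul_left_comm, mul_assoc]
  -- the range of M lies in the eigenspace of L(k)
  set ES := LinearMap.ker (((Lm ε η k).map Complex.ofReal).mulVecLin
      - ω • (LinearMap.id : (Fin 3 ⊕ Fin 3 → ℂ) →ₗ[ℂ] (Fin 3 ⊕ Fin 3 → ℂ))) with hES
  have hrange : LinearMap.range M.mulVecLin ≤ ES := by
    rintro x ⟨y, rfl⟩
    rw [hES, LinearMap.mem_ker]
    simp only [LinearMap.sub_apply, LinearMap.smul_apply, LinearMap.id_apply,
      Matrix.mulVecLin_apply]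
    rw [Matrix.mulVec_mulVec, hLM, Matrix.smul_mulVec, sub_self]
  have hrank : M.rank ≤ 2 := by
    have h1 : M.rank = Module.finrank ℂ (LinearMap.range M.mulVecLin) := rfl
    rw [h1]
    exact le_trans (Submodule.finrank_mono hrange) (eig_finrank_le ε η hε hη k hk)
  -- at most two nonzero eigenvalues
  classical
  set S : Finset (Fin 3 ⊕ Fin 3) := Finset.univ.filter (fun l => hH.eigenvalues l ≠ 0) with hS
  have hcard : S.card ≤ 2 := by
    have h1 := hH.rank_eq_card_non_zero_eigs
    rw [Fintype.card_subtype] at h1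
    rw [hS]
    omega
  have hMS : M = ∑ l ∈ S, ((hH.eigenvalues l : ℝ) : ℂ) •
      vecMulVec (fun i => hH.eigenvectorBasis l i)
        (fun i => (starRingEnd ℂ) (hH.eigenvectorBasis l i)) := by
    conv_lhs => rw [hsum]
    refine (Finset.sum_filter_of_ne ?_).symm
    intro x _ hx
    by_contra hxx
    apply hx
    rw [hxx]
    simp
  -- eigenvector property
  have heig : ∀ l, hH.eigenvalues l ≠ 0 →
      (Lm ε η k).map Complex.ofReal *ᵥ (fun i => hH.eigenvectorBasis l i)
        = ω • (fun i => hH.eigenvectorBasis l i) := by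
    intro l hl
    set u : Fin 3 ⊕ Fin 3 → ℂ := fun i => hH.eigenvectorBasis l i with hu
    have hMu : M *ᵥ u = ((hH.eigenvalues l : ℝ) : ℂ) • u := by
      funext i
      have := congrFun (hH.mulVec_eigenvectorBasis l) i
      simpa [Pi.smul_apply, Complex.real_smul, smul_eq_mul, hu] using this
    have hlc : ((hH.eigenvalues l : ℝ) : ℂ) ≠ 0 := Complex.ofReal_ne_zero.mpr hl
    have h2 : (Lm ε η k).map Complex.ofReal *ᵥ (M *ᵥ u) = ω • (M *ᵥ u) := by
      rw [Matrix.mulVec_mulVec, hLM, Matrix.smul_mulVec]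
    rw [hMu, Matrix.mulVec_smul, smul_comm ω] at h2
    exact smul_right_injective _ hlc h2
  -- case analysis on the number of nonzero eigenvalues
  rcases (by omega : S.card = 0 ∨ S.card = 1 ∨ S.card = 2) with h | h | h
  · rw [Finset.card_eq_zero] at h
    refine ⟨0, 0, 0, 0, le_rfl, le_rfl, by simp, by simp, ?_⟩
    conv_lhs => rw [hMS]
    rw [h]
    simp
  · obtain ⟨a, ha⟩ := Finset.card_eq_one.mp h
    have haS : a ∈ S := ha ▸ Finset.mem_singleton_self a
    have hla : hH.eigenvalues a ≠ 0 := (Finset.mem_filter.mp haS).2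
    refine ⟨hH.eigenvalues a, 0, (fun i => hH.eigenvectorBasis a i), 0,
      hM.eigenvalues_nonneg a, le_rfl, heig a hla, by simp, ?_⟩
    conv_lhs => rw [hMS]
    rw [ha, Finset.sum_singleton]
    simp
  · obtain ⟨a, b, hab, hS2⟩ := Finset.card_eq_two.mp h
    have haS : a ∈ S := by rw [hS2]; simp
    have hbS : b ∈ S := by rw [hS2]; simp
    have hla : hH.eigenvalues a ≠ 0 := (Finset.mem_filter.mp haS).2
    have hlb : hH.eigenvalues b ≠ 0 := (Finset.mem_filter.mp hbS).2
    refine ⟨hH.eigenvalues a, hH.eigenvalues b, (fun i => hH.eigenvectorBasis a i),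
      (fun i => hH.eigenvectorBasis b i), hM.eigenvalues_nonneg a, hM.eigenvalues_nonneg b,
      heig a hla, heig b hlb, ?_⟩
    conv_lhs => rw [hMS]
    rw [hS2, Finset.sum_pair hab]
end
end
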